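/- arXiv:2007.07237 — 4 statements merged into one kernel-verified Lean document; each statement's English description precedes it below -/
import Mathlib

section
/- Let R be a subdirect product of finite algebras A₁,…,Aₙ, with prime intervals α_i ≺ β_i in Con(A_i) and α_j ≺ β_j in Con(A_j), and suppose some unary polynomial of R separates (α_i,β_i) from (α_j,β_j). Then there is an idempotent unary polynomial f of R separating (α_i,β_i) from (α_j,β_j) such that the image f(A_i) is an (α_i,β_i)-minimal set. -/
namespace UAlg

structure Sig where
  ι : Type
  arity : ι → ℕ

inductive Term (σ : Sig) (n : ℕ) : Type where
  | var : Fin n → Term σ n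
  | app : (i : σ.ι) → (Fin (σ.arity i) → Term σ n) → Term σ n

def Str (σ : Sig) (A : Type) : Type := ∀ i : σ.ι, (Fin (σ.arity i) → A) → A

variable {σ : Sig} {A B : Type}

def Term.eval {n : ℕ} (S : Str σ A) : Term σ n → (Fin n → A) → A
  | .var j, x => x j
  | .app i ts, x => S i fun k => Term.eval S (ts k) x

/-- A subuniverse: a subset closed under all basic operations. -/
def Subuniv (S : Str σ A) (X : Set A) : Prop :=
  ∀ (i : σ.ι) (x : Fin (σ.arity i) → A), (∀ k, x k ∈ X) → S i x ∈ X

/-- Subalgebra generated by a set. -/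
def Sg (S : Str σ A) (X : Set A) : Set A :=
  {a | ∀ Y : Set A, Subuniv S Y → X ⊆ Y → a ∈ Y}

def prodStr (S : Str σ A) (T : Str σ B) : Str σ (A × B) :=
  fun i x => (S i (fun k => (x k).1), T i (fun k => (x k).2))

structure IsCongruence (S : Str σ A) (r : A → A → Prop) : Prop where
  refl : ∀ a, r a a
  symm : ∀ a b, r a b → r b a
  trans : ∀ a b c, r a b → r b c → r a c
  compat : ∀ (i : σ.ι) (x y : Fin (σ.arity i) → A),
    (∀ k, r (x k) (y k)) → r (S i x) (S i y)

/-- A tolerance: reflexive, symmetric, compatible binary relation. -/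
def IsTolerance (S : Str σ A) (r : A → A → Prop) : Prop :=
  (∀ a, r a a) ∧ (∀ a b, r a b → r b a) ∧
    ∀ (i : σ.ι) (x y : Fin (σ.arity i) → A),
      (∀ k, r (x k) (y k)) → r (S i x) (S i y)

/-- Unary polynomial: a term operation with parameters. -/
def IsUnaryPoly (S : Str σ A) (f : A → A) : Prop :=
  ∃ (n : ℕ) (t : Term σ (n + 1)) (c : Fin n → A),
    f = fun x => t.eval S (Fin.cons x c)

def IsBinPoly (S : Str σ A) (f : A → A → A) : Prop :=
  ∃ (n : ℕ) (t : Term σ (n + 2)) (c : Fin n → A),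
    f = fun x y => t.eval S (Fin.cons x (Fin.cons y c))

def IsPolyOp (S : Str σ A) (n : ℕ) (f : (Fin n → A) → A) : Prop :=
  ∃ (m : ℕ) (t : Term σ (n + m)) (c : Fin m → A),
    f = fun x => t.eval S (Fin.append x c)

def IsTermOp2 (S : Str σ A) (f : A → A → A) : Prop :=
  ∃ t : Term σ 2, f = fun x y => t.eval S (Fin.cons x (Fin.cons y (fun i => i.elim0)))

def IsTermOp3 (S : Str σ A) (f : A → A → A → A) : Prop :=
  ∃ t : Term σ 3,
    f = fun x y z => t.eval S (Fin.cons x (Fin.cons y (Fin.cons z (fun i => i.elim0))))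

/-- `f` collapses `β` into `α`. -/
def Collapses (f : A → A) (β α : A → A → Prop) : Prop :=
  ∀ x y, β x y → α (f x) (f y)

def CongLE (r s : A → A → Prop) : Prop := ∀ x y, r x y → s x y

/-- `β` covers `α` in the congruence lattice. -/
def Prec (S : Str σ A) (α β : A → A → Prop) : Prop :=
  CongLE α β ∧ α ≠ β ∧
    ∀ γ, IsCongruence S γ → CongLE α γ → CongLE γ β → γ = α ∨ γ = β

def MinSetWitness (S : Str σ A) (α β : A → A → Prop) (U : Set A) : Prop :=
  ∃ f, IsUnaryPoly S f ∧ ¬ Collapses f β α ∧ Set.range f = U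

/-- An (α,β)-minimal set. -/
def MinSet (S : Str σ A) (α β : A → A → Prop) (U : Set A) : Prop :=
  MinSetWitness S α β U ∧ ∀ V, MinSetWitness S α β V → V ⊆ U → V = U

/-- Term condition C(θ,β;α) (with polynomials). -/
def TC (S : Str σ A) (θ β α : A → A → Prop) : Prop :=
  ∀ (n : ℕ) (f : (Fin (n + 1) → A) → A), IsPolyOp S (n + 1) f →
    ∀ a b (u v : Fin n → A), θ a b → (∀ i, β (u i) (v i)) →
      (α (f (Fin.cons a u)) (f (Fin.cons a v)) ↔ α (f (Fin.cons b u)) (f (Fin.cons b v)))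

/-- Strong term condition. -/
def STC (S : Str σ A) (θ β α : A → A → Prop) : Prop :=
  ∀ (n : ℕ) (f : (Fin (n + 1) → A) → A), IsPolyOp S (n + 1) f →
    ∀ a b c (u v : Fin n → A), θ a b → θ a c → (∀ i, β (u i) (v i)) →
      α (f (Fin.cons a u)) (f (Fin.cons b v)) → α (f (Fin.cons c u)) (f (Fin.cons c v))

/-- An (α,β)-trace: intersection of a minimal set with a β-block on which β ≠ α. -/
def IsTrace (S : Str σ A) (α β : A → A → Prop) (N : Set A) : Prop :=
  ∃ U, MinSet S α β U ∧ ∃ a ∈ U, N = {x | x ∈ U ∧ β x a} ∧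
    ∃ x ∈ N, ∃ y ∈ N, ¬ α x y

def TwoClasses (α : A → A → Prop) (N : Set A) (o e : A) : Prop :=
  o ∈ N ∧ e ∈ N ∧ ¬ α o e ∧ ∀ x ∈ N, α x o ∨ α x e

def MeetOn (S : Str σ A) (α : A → A → Prop) (N : Set A) (o e : A) : Prop :=
  ∃ p, IsBinPoly S p ∧ (∀ x ∈ N, ∀ y ∈ N, p x y ∈ N) ∧
    ∀ x ∈ N, ∀ y ∈ N,
      (α x e → α y e → α (p x y) e) ∧ ((α x o ∨ α y o) → α (p x y) o)

def JoinOn (S : Str σ A) (α : A → A → Prop) (N : Set A) (o e : A) : Prop :=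
  ∃ p, IsBinPoly S p ∧ (∀ x ∈ N, ∀ y ∈ N, p x y ∈ N) ∧
    ∀ x ∈ N, ∀ y ∈ N,
      ((α x e ∨ α y e) → α (p x y) e) ∧ (α x o → α y o → α (p x y) o)

def NegOn (S : Str σ A) (α : A → A → Prop) (N : Set A) (o e : A) : Prop :=
  ∃ f, IsUnaryPoly S f ∧ (∀ x ∈ N, f x ∈ N) ∧
    ∀ x ∈ N, (α x e → α (f x) o) ∧ (α x o → α (f x) e)

def Typ3 (S : Str σ A) (α β : A → A → Prop) : Prop :=
  ¬ TC S β β α ∧ ∀ N, IsTrace S α β N →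
    ∃ o e, TwoClasses α N o e ∧ MeetOn S α N o e ∧ JoinOn S α N o e ∧ NegOn S α N o e

def Typ4 (S : Str σ A) (α β : A → A → Prop) : Prop :=
  ¬ TC S β β α ∧ (∀ N, IsTrace S α β N →
    ∃ o e, TwoClasses α N o e ∧ MeetOn S α N o e ∧ JoinOn S α N o e) ∧ ¬ Typ3 S α β

def Typ5 (S : Str σ A) (α β : A → A → Prop) : Prop :=
  ¬ TC S β β α ∧ (∀ N, IsTrace S α β N →
    ∃ o e, TwoClasses α N o e ∧ MeetOn S α N o e) ∧ ¬ Typ3 S α β ∧ ¬ Typ4 S α β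

/-- Tame-congruence-theoretic type of the prime interval (α,β). -/
def TypIs (S : Str σ A) (α β : A → A → Prop) (k : ℕ) : Prop :=
  match k with
  | 1 => STC S β β α
  | 2 => TC S β β α ∧ ¬ STC S β β α
  | 3 => Typ3 S α β
  | 4 => Typ4 S α β
  | 5 => Typ5 S α β
  | _ => False

/-- θ centralizes β modulo α (via binary polynomials). -/
def Centralizes (S : Str σ A) (θ β α : A → A → Prop) : Prop :=
  ∀ f, IsBinPoly S f → ∀ a b c d, θ a b → β c d →
    (α (f a c) (f a d) ↔ α (f b c) (f b d))

/-- ζ is the centralizer (α:β): the largest congruence centralizing β modulo α. -/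
def IsCentralizer (S : Str σ A) (α β ζ : A → A → Prop) : Prop :=
  IsCongruence S ζ ∧ Centralizes S ζ β α ∧
    ∀ θ, IsCongruence S θ → Centralizes S θ β α → CongLE θ ζ

/-- The quasi-centralizer relation ζ(α,β). -/
def QuasiCent (S : Str σ A) (α β : A → A → Prop) (a b : A) : Prop :=
  ∀ g, IsBinPoly S g →
    (Collapses (fun y => g a y) β α ↔ Collapses (fun y => g b y) β α)

def SubdirectProd (S : Str σ A) (T : Str σ B) (R : Set (A × B)) : Prop :=
  Subuniv (prodStr S T) R ∧ (∀ a, ∃ b, (a, b) ∈ R) ∧ (∀ b, ∃ a, (a, b) ∈ R)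

/-- (f,g) are the coordinate actions of a single unary polynomial of R. -/
def IsPolyPair (S : Str σ A) (T : Str σ B) (R : Set (A × B)) (f : A → A) (g : B → B) : Prop :=
  ∃ (n : ℕ) (t : Term σ (n + 1)) (c : Fin n → A × B), (∀ k, c k ∈ R) ∧
    (f = fun x => t.eval S (Fin.cons x (fun k => (c k).1))) ∧
    (g = fun y => t.eval T (Fin.cons y (fun k => (c k).2)))

def SeparatesPair (S : Str σ A) (T : Str σ B) (R : Set (A × B))
    (α β : A → A → Prop) (γ δ : B → B → Prop) : Prop :=
  ∃ f g, IsPolyPair S T R f g ∧ ¬ Collapses f β α ∧ Collapses g δ γ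

def SeparatesPairRev (S : Str σ A) (T : Str σ B) (R : Set (A × B))
    (γ δ : B → B → Prop) (α β : A → A → Prop) : Prop :=
  ∃ f g, IsPolyPair S T R f g ∧ ¬ Collapses g δ γ ∧ Collapses f β α

/-- Separation of prime intervals within a single algebra. -/
def SeparatesIn (S : Str σ A) (α β γ δ : A → A → Prop) : Prop :=
  ∃ f, IsUnaryPoly S f ∧ ¬ Collapses f β α ∧ Collapses f δ γ

def tolFst (R : Set (A × B)) : A → A → Prop := fun a b => ∃ c, (a, c) ∈ R ∧ (b, c) ∈ R
def tolSnd (R : Set (A × B)) : B → B → Prop := fun a b => ∃ c, (c, a) ∈ R ∧ (c, b) ∈ R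

/-- Q_ab: the subalgebra of A² generated by the diagonal together with (a,b). -/
def Qab (S : Str σ A) (a b : A) : Set (A × A) :=
  Sg (prodStr S S) ({p : A × A | p.1 = p.2} ∪ {(a, b)})

/-- Principal congruence generated by (a,b). -/
def CgPair (S : Str σ A) (a b : A) : A → A → Prop :=
  fun x y => ∀ r, IsCongruence S r → r a b → r x y

def CongSup (S : Str σ A) (r s : A → A → Prop) : A → A → Prop :=
  fun x y => ∀ t, IsCongruence S t → CongLE r t → CongLE s t → t x y

def RelInf (r s : A → A → Prop) : A → A → Prop := fun x y => r x y ∧ s x y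

def Perspective (S : Str σ A) (α β γ δ : A → A → Prop) : Prop :=
  (β = CongSup S α δ ∧ γ = RelInf α δ) ∨ (δ = CongSup S β γ ∧ α = RelInf β γ)

/-- Thin semilattice edge modulo θ. -/
def ThinSL (S : Str σ A) (θ : A → A → Prop) (a b : A) : Prop :=
  ∃ f, IsTermOp2 S f ∧ θ (f a b) b ∧ θ (f b a) b

/-- Thin majority edge modulo θ. -/
def ThinMajE (S : Str σ A) (θ : A → A → Prop) (a b : A) : Prop :=
  ∃ g, IsTermOp3 S g ∧ θ (g a a b) a ∧ θ (g a b a) a ∧ θ (g b a a) a ∧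
    θ (g a b b) b ∧ θ (g b a b) b ∧ θ (g b b a) b

/-- Thin affine edge modulo θ. -/
def ThinAff (S : Str σ A) (θ : A → A → Prop) (a b : A) : Prop :=
  ∃ h, IsTermOp3 S h ∧ θ (h b a a) b ∧ θ (h a a b) b

def ThinEdge (S : Str σ A) (θ : A → A → Prop) (a b : A) : Prop :=
  ThinSL S θ a b ∨ ThinMajE S θ a b ∨ ThinAff S θ a b

def ThinAS (S : Str σ A) (θ : A → A → Prop) (a b : A) : Prop :=
  ThinSL S θ a b ∨ ThinAff S θ a b

def classOf (r : A → A → Prop) (a : A) : Set A := {x | r x a}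

def IdemStr (S : Str σ A) : Prop := ∀ (i : σ.ι) (a : A), S i (fun _ => a) = a

def OmitsType1 (S : Str σ A) : Prop :=
  ∀ α β : A → A → Prop, IsCongruence S α → IsCongruence S β → Prec S α β →
    ¬ TypIs S α β 1

def ReachASIn (S : Str σ A) (B : Set A) : A → A → Prop :=
  Relation.ReflTransGen (fun x y => x ∈ B ∧ y ∈ B ∧ ThinAS S (· = ·) x y)

/-- D is a maximal strongly connected component of the semilattice+affine digraph on B. -/
def IsASComponent (S : Str σ A) (B D : Set A) : Prop :=
  D.Nonempty ∧ D ⊆ B ∧ (∀ x ∈ D, ∀ y ∈ D, ReachASIn S B x y) ∧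
    ∀ x ∈ D, ∀ y ∈ B, ReachASIn S B x y → y ∈ D

def Reach (S : Str σ A) : A → A → Prop :=
  Relation.ReflTransGen (ThinEdge S (· = ·))

/-- u-maximal element of A. -/
def UMax (S : Str σ A) (a : A) : Prop := ∀ b, Reach S a b → Reach S b a

def ReachIn (S : Str σ A) (B : Set A) : A → A → Prop :=
  Relation.ReflTransGen (fun x y => x ∈ B ∧ y ∈ B ∧ ThinEdge S (· = ·) x y)

/-- u-maximal element of the subalgebra B. -/
def UMaxIn (S : Str σ A) (B : Set A) (b : A) : Prop :=
  b ∈ B ∧ ∀ c ∈ B, ReachIn S B b c → ReachIn S B c b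

def ReachMod (S : Str σ A) (θ : A → A → Prop) : A → A → Prop :=
  Relation.ReflTransGen (fun x y => θ x y ∨ ThinEdge S θ x y)

/-- The θ-block of a is u-maximal in A/θ. -/
def UMaxMod (S : Str σ A) (θ : A → A → Prop) (a : A) : Prop :=
  ∀ b, ReachMod S θ a b → ReachMod S θ b a

def CongOn (S : Str σ A) (B : Set A) (r : A → A → Prop) : Prop :=
  (∀ a ∈ B, r a a) ∧ (∀ a b, r a b → r b a) ∧ (∀ a b c, r a b → r b c → r a c) ∧
    ∀ (i : σ.ι) (x y : Fin (σ.arity i) → A), (∀ k, x k ∈ B) → (∀ k, y k ∈ B) →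
      (∀ k, r (x k) (y k)) → r (S i x) (S i y)

def MaximalCongOn (S : Str σ A) (B : Set A) (r : A → A → Prop) : Prop :=
  CongOn S B r ∧ (∃ a ∈ B, ∃ b ∈ B, ¬ r a b) ∧
    ∀ r', CongOn S B r' → (∀ x y, x ∈ B → y ∈ B → r x y → r' x y) →
      ((∀ x y, x ∈ B → y ∈ B → (r' x y ↔ r x y)) ∨ ∀ x ∈ B, ∀ y ∈ B, r' x y)

/-- Semilattice edge (thick). -/
def SLEdge (S : Str σ A) (a b : A) : Prop :=
  ∃ θ, MaximalCongOn S (Sg S {a, b}) θ ∧ ¬ θ a b ∧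
    ∃ f, IsTermOp2 S f ∧ θ (f a b) b ∧ θ (f b a) b ∧ θ (f a a) a ∧ θ (f b b) b

/-- Majority edge (thick). -/
def MajEdge (S : Str σ A) (a b : A) : Prop :=
  ∃ θ, MaximalCongOn S (Sg S {a, b}) θ ∧ ¬ θ a b ∧
    ∃ g, IsTermOp3 S g ∧ θ (g a a b) a ∧ θ (g a b a) a ∧ θ (g b a a) a ∧
      θ (g a b b) b ∧ θ (g b a b) b ∧ θ (g b b a) b

def famStr {n : ℕ} {𝔸 : Fin n → Type} (S : ∀ i, Str σ (𝔸 i)) : Str σ (∀ i, 𝔸 i) :=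
  fun op x i => S i op (fun k => x k i)

def SubdirectFam {n : ℕ} {𝔸 : Fin n → Type} (S : ∀ i, Str σ (𝔸 i))
    (R : Set (∀ i, 𝔸 i)) : Prop :=
  Subuniv (famStr S) R ∧ ∀ (i : Fin n) (a : 𝔸 i), ∃ r ∈ R, r i = a

/-- f is the family of coordinate actions of a single unary polynomial of R. -/
def IsPolyFam {n : ℕ} {𝔸 : Fin n → Type} (S : ∀ i, Str σ (𝔸 i)) (R : Set (∀ i, 𝔸 i))
    (f : ∀ i, 𝔸 i → 𝔸 i) : Prop :=
  ∃ (m : ℕ) (t : Term σ (m + 1)) (c : Fin m → ∀ i, 𝔸 i), (∀ k, c k ∈ R) ∧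
    ∀ i, f i = fun x => t.eval (S i) (Fin.cons x (fun k => c k i))

/-- (α_i,β_i) can be separated from (α_j,β_j) by a unary polynomial of R. -/
def SeparatesFam {n : ℕ} {𝔸 : Fin n → Type} (S : ∀ i, Str σ (𝔸 i)) (R : Set (∀ i, 𝔸 i))
    (i j : Fin n) (αi βi : 𝔸 i → 𝔸 i → Prop) (αj βj : 𝔸 j → 𝔸 j → Prop) : Prop :=
  ∃ f, IsPolyFam S R f ∧ ¬ Collapses (f i) βi αi ∧ Collapses (f j) βj αj

end UAlg

/-!
Among the polynomials of `R` separating `(αᵢ,βᵢ)` from `(αⱼ,βⱼ)` choose `g` whose image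
`U = g(Aᵢ)` is as small as possible. Since `βᵢ` is generated modulo `αᵢ` by any pair
`(u,v) ∈ βᵢ \ αᵢ` through unary polynomials, every unary polynomial `p` of `Aᵢ` with
`p(βᵢ) ⊄ αᵢ` admits a polynomial `q` with `(p q u, p q v) ∉ αᵢ`; lifting `p ∘ q` to `R` and
composing with `g` gives a separating polynomial with image inside `p(Aᵢ)`, so `U` is a
minimal set. Likewise `g ∘ q` maps `U` onto `U`, and an idempotent in the finite semigroup of
polynomials of `R` that map `U` onto `U` and collapse `βⱼ` into `αⱼ` fixes `U` pointwise.
-/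

namespace UAlg

section Polynomials

variable {σ : Sig} {A : Type} {S : Str σ A}

def Term.subst {n m : ℕ} : Term σ n → (Fin n → Term σ m) → Term σ m
  | .var j, θ => θ j
  | .app i ts, θ => .app i (fun k => (ts k).subst θ)

lemma Term.eval_subst {n m : ℕ} (t : Term σ n) (θ : Fin n → Term σ m) (x : Fin m → A) :
    (t.subst θ).eval S x = t.eval S (fun j => (θ j).eval S x) := by
  induction t with
  | var j => rfl
  | app op ts ih => simp only [Term.subst, Term.eval, ih]

/-- Substitutes `t₂` into the first variable of `t₁`; the parameters of `t₁` come first. -/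
def Term.compUnary {n₁ n₂ : ℕ} (t₁ : Term σ (n₁ + 1)) (t₂ : Term σ (n₂ + 1)) :
    Term σ (n₁ + n₂ + 1) :=
  t₁.subst (Fin.cons
    (t₂.subst (Fin.cons (.var 0) (fun k => .var (Fin.natAdd n₁ k).succ)))
    (fun k => .var (Fin.castAdd n₂ k).succ))

lemma Term.eval_compUnary {n₁ n₂ : ℕ} (t₁ : Term σ (n₁ + 1)) (t₂ : Term σ (n₂ + 1))
    (c₁ : Fin n₁ → A) (c₂ : Fin n₂ → A) (x : A) :
    (t₁.compUnary t₂).eval S (Fin.cons x (Fin.append c₁ c₂)) =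
      t₁.eval S (Fin.cons (t₂.eval S (Fin.cons x c₂)) c₁) := by
  rw [Term.compUnary, Term.eval_subst]
  congr 1
  funext l
  refine Fin.cases ?_ (fun k => ?_) l
  · rw [Fin.cons_zero, Term.eval_subst]
    congr 1
    funext l'
    refine Fin.cases ?_ (fun k => ?_) l' <;> simp [Term.eval, Fin.append_right]
  · simp [Term.eval, Fin.append_left]

lemma IsUnaryPoly.id : IsUnaryPoly S (fun x => x) :=
  ⟨0, .var 0, Fin.elim0, rfl⟩

lemma IsUnaryPoly.comp {p q : A → A} (hp : IsUnaryPoly S p) (hq : IsUnaryPoly S q) :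
    IsUnaryPoly S (fun x => p (q x)) := by
  obtain ⟨n₁, t₁, c₁, rfl⟩ := hp
  obtain ⟨n₂, t₂, c₂, rfl⟩ := hq
  exact ⟨n₁ + n₂, t₁.compUnary t₂, Fin.append c₁ c₂,
    funext fun x => (Term.eval_compUnary t₁ t₂ c₁ c₂ x).symm⟩

lemma isUnaryPoly_update (op : σ.ι) (w : Fin (σ.arity op) → A) (k : Fin (σ.arity op)) :
    IsUnaryPoly S (fun a => S op (Function.update w k a)) := by
  refine ⟨σ.arity op, .app op (fun l => if l = k then .var 0 else .var l.succ), w, ?_⟩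
  funext a
  show S op _ = S op _
  congr 1
  funext l
  by_cases h : l = k <;> simp [Term.eval, h]

lemma IsCongruence.eval_rel {θ : A → A → Prop} (hθ : IsCongruence S θ) {m : ℕ}
    (t : Term σ m) {x y : Fin m → A} (h : ∀ l, θ (x l) (y l)) :
    θ (t.eval S x) (t.eval S y) := by
  induction t with
  | var l => exact h l
  | app op ts ih => exact hθ.compat op _ _ ih

lemma IsUnaryPoly.map_rel {θ : A → A → Prop} (hθ : IsCongruence S θ) {p : A → A}
    (hp : IsUnaryPoly S p) {a b : A} (hab : θ a b) : θ (p a) (p b) := by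
  obtain ⟨m, t, c, rfl⟩ := hp
  exact hθ.eval_rel t fun l => Fin.cases hab (fun k => hθ.refl (c k)) l

end Polynomials

section Congruences

variable {σ : Sig} {A : Type} {S : Str σ A}

lemma IsCongruence.inf {r s : A → A → Prop} (hr : IsCongruence S r) (hs : IsCongruence S s) :
    IsCongruence S (RelInf r s) where
  refl a := ⟨hr.refl a, hs.refl a⟩
  symm a b h := ⟨hr.symm a b h.1, hs.symm a b h.2⟩
  trans a b c h h' := ⟨hr.trans a b c h.1 h'.1, hs.trans a b c h.2 h'.2⟩
  compat op x y h := ⟨hr.compat op x y fun k => (h k).1, hs.compat op x y fun k => (h k).2⟩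

/-- An operation can be moved from `x` to `y` one argument at a time, each step being the
image of a related pair under a unary polynomial. -/
lemma IsCongruence.of_unaryPoly {r : A → A → Prop} (hr : Equivalence r)
    (hpoly : ∀ p, IsUnaryPoly S p → ∀ a b, r a b → r (p a) (p b)) : IsCongruence S r := by
  classical
  refine ⟨hr.refl, fun _ _ => hr.symm, fun _ _ _ => hr.trans, fun op x y hxy => ?_⟩
  have hstep : ∀ T : Finset (Fin (σ.arity op)), r (S op x) (S op (T.piecewise y x)) := by
    intro T
    induction T using Finset.induction with
    | empty => simpa using hr.refl _
    | insert k T hk ih =>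
      refine hr.trans ih ?_
      have hxk : Function.update (T.piecewise y x) k (x k) = T.piecewise y x :=
        Function.update_eq_self_iff.mpr (Finset.piecewise_eq_of_notMem _ _ _ hk).symm
      rw [Finset.piecewise_insert, ← hxk, Function.update_idem]
      exact hpoly _ (isUnaryPoly_update op _ k) _ _ (hxy k)
  simpa using hstep Finset.univ

lemma Prec.exists_unaryPoly_not_rel_comp {α β : A → A → Prop} (hα : IsCongruence S α)
    (hβ : IsCongruence S β) (hαβ : Prec S α β) {u v : A} (huv : β u v) (hnuv : ¬ α u v)
    {p : A → A} (hp : IsUnaryPoly S p) (hpβ : ¬ Collapses p β α) :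
    ∃ q, IsUnaryPoly S q ∧ ¬ α (p (q u)) (p (q v)) := by
  -- `θ ⊓ β` lies between `α` and `β`, and it is not `β` because `p(β) ⊄ α`.
  set θ : A → A → Prop := fun a b => ∀ q, IsUnaryPoly S q → α (p (q a)) (p (q b))
  have hθ : IsCongruence S θ := by
    refine .of_unaryPoly ⟨fun a q _ => hα.refl _, fun h q hq => hα.symm _ _ (h q hq),
      fun h h' q hq => hα.trans _ _ _ (h q hq) (h' q hq)⟩ ?_
    exact fun r hr a b h q hq => h _ (hq.comp hr)
  have hαθ : CongLE α (RelInf θ β) := fun a b h =>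
    ⟨fun q hq => (hp.comp hq).map_rel hα h, hαβ.1 a b h⟩
  rcases hαβ.2.2 _ (hθ.inf hβ) hαθ (fun _ _ h => h.2) with h | h
  · by_contra! hθuv
    exact hnuv (h ▸ ⟨hθuv, huv⟩)
  · refine absurd (fun a b hab => ?_) hpβ
    rw [← h] at hab
    exact hab.1 _ IsUnaryPoly.id

end Congruences

lemma exists_idempotent_in_finite_subsemigroup {M : Type*} [Semigroup M] [Finite M]
    {s : Set M} (hs : s.Nonempty) (hmul : ∀ x ∈ s, ∀ y ∈ s, x * y ∈ s) :
    ∃ m ∈ s, m * m = m := by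
  let : TopologicalSpace M := ⊥
  have : DiscreteTopology M := ⟨rfl⟩
  exact exists_idempotent_in_compact_subsemigroup (fun _ => continuous_of_discreteTopology)
    s hs s.toFinite.isCompact hmul

lemma exists_idempotent_of_comp_mem {ι : Type*} {X : ι → Type*} [Finite (∀ k, X k → X k)]
    {s : Set (∀ k, X k → X k)} (hs : s.Nonempty)
    (hcomp : ∀ f ∈ s, ∀ g ∈ s, (fun k x => f k (g k x)) ∈ s) :
    ∃ e ∈ s, ∀ k x, e k (e k x) = e k x := by
  have : Finite (∀ k, Function.End (X k)) := ‹_›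
  obtain ⟨e, he, hee⟩ :=
    exists_idempotent_in_finite_subsemigroup (M := ∀ k, Function.End (X k)) hs hcomp
  exact ⟨e, he, fun k x => congrFun (congrFun hee k) x⟩

section Families

variable {σ : Sig} {n : ℕ} {𝔸 : Fin n → Type} {S : ∀ k, Str σ (𝔸 k)} {R : Set (∀ k, 𝔸 k)}

lemma IsPolyFam.coord {f : ∀ k, 𝔸 k → 𝔸 k} (hf : IsPolyFam S R f) (k : Fin n) :
    IsUnaryPoly (S k) (f k) := by
  obtain ⟨m, t, c, -, hfc⟩ := hf
  exact ⟨m, t, fun l => c l k, hfc k⟩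

lemma IsPolyFam.comp {f g : ∀ k, 𝔸 k → 𝔸 k} (hf : IsPolyFam S R f) (hg : IsPolyFam S R g) :
    IsPolyFam S R (fun k x => f k (g k x)) := by
  obtain ⟨m₁, t₁, c₁, hc₁, hf⟩ := hf
  obtain ⟨m₂, t₂, c₂, hc₂, hg⟩ := hg
  refine ⟨m₁ + m₂, t₁.compUnary t₂, Fin.append c₁ c₂,
    Fin.addCases (by simpa using hc₁) (by simpa using hc₂), fun k => funext fun x => ?_⟩
  have hck : (fun l => Fin.append c₁ c₂ l k) = Fin.append (c₁ · k) (c₂ · k) := by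
    funext l
    refine Fin.addCases (fun l => ?_) (fun l => ?_) l <;> simp
  show f k (g k x) = _
  rw [hck, Term.eval_compUnary, hf k, hg k]

lemma SubdirectFam.exists_isPolyFam_apply_eq (hR : SubdirectFam S R) (i : Fin n)
    {p : 𝔸 i → 𝔸 i} (hp : IsUnaryPoly (S i) p) : ∃ f, IsPolyFam S R f ∧ f i = p := by
  obtain ⟨m, t, c, rfl⟩ := hp
  choose r hrR hri using fun l => hR.2 i (c l)
  refine ⟨fun k x => t.eval (S k) (Fin.cons x (r · k)), ⟨m, t, r, hrR, fun k => rfl⟩, ?_⟩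
  simp only [hri]

end Families

section Separation

variable {σ : Sig} {n : ℕ} {𝔸 : Fin n → Type} {S : ∀ k, Str σ (𝔸 k)} {R : Set (∀ k, 𝔸 k)}
  {i j : Fin n} {αi βi : 𝔸 i → 𝔸 i → Prop} {αj βj : 𝔸 j → 𝔸 j → Prop}

def IsSeparatingPolyFam (S : ∀ k, Str σ (𝔸 k)) (R : Set (∀ k, 𝔸 k)) (i j : Fin n)
    (αi βi : 𝔸 i → 𝔸 i → Prop) (αj βj : 𝔸 j → 𝔸 j → Prop) (f : ∀ k, 𝔸 k → 𝔸 k) : Prop :=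
  IsPolyFam S R f ∧ ¬ Collapses (f i) βi αi ∧ Collapses (f j) βj αj

lemma SeparatesFam.exists_isSeparatingPolyFam_ncard_range_le
    (hsep : SeparatesFam S R i j αi βi αj βj) :
    ∃ g, IsSeparatingPolyFam S R i j αi βi αj βj g ∧
      ∀ f, IsSeparatingPolyFam S R i j αi βi αj βj f →
        (Set.range (g i)).ncard ≤ (Set.range (f i)).ncard := by
  obtain ⟨g, hg, hmin⟩ := (measure fun f : ∀ k, 𝔸 k → 𝔸 k => (Set.range (f i)).ncard).wf.has_min
    {f | IsSeparatingPolyFam S R i j αi βi αj βj f} hsep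
  exact ⟨g, hg, fun f hf => not_lt.mp (hmin f hf)⟩

lemma IsSeparatingPolyFam.comp_left (hαj : IsCongruence (S j) αj)
    {g : ∀ k, 𝔸 k → 𝔸 k} (hg : IsSeparatingPolyFam S R i j αi βi αj βj g)
    {f : ∀ k, 𝔸 k → 𝔸 k} (hf : IsPolyFam S R f) {x y : 𝔸 i} (hxy : βi x y)
    (hfg : ¬ αi (f i (g i x)) (f i (g i y))) :
    IsSeparatingPolyFam S R i j αi βi αj βj (fun k z => f k (g k z)) :=
  ⟨hf.comp hg.1, fun h => hfg (h x y hxy),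
    fun a b hab => (hf.coord j).map_rel hαj (hg.2.2 a b hab)⟩

variable [∀ k, Finite (𝔸 k)]

lemma IsSeparatingPolyFam.minSet_range_of_ncard_le (hR : SubdirectFam S R)
    (hαi : IsCongruence (S i) αi) (hβi : IsCongruence (S i) βi) (hpi : Prec (S i) αi βi)
    (hαj : IsCongruence (S j) αj) {g : ∀ k, 𝔸 k → 𝔸 k}
    (hg : IsSeparatingPolyFam S R i j αi βi αj βj g)
    (hmin : ∀ f, IsSeparatingPolyFam S R i j αi βi αj βj f →
      (Set.range (g i)).ncard ≤ (Set.range (f i)).ncard) :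
    MinSet (S i) αi βi (Set.range (g i)) := by
  obtain ⟨x, y, hxy, hgxy⟩ : ∃ x y, βi x y ∧ ¬ αi (g i x) (g i y) := by
    simpa [Collapses] using hg.2.1
  refine ⟨⟨g i, hg.1.coord i, hg.2.1, rfl⟩, ?_⟩
  rintro V ⟨p, hp, hpβ, rfl⟩ hpg
  obtain ⟨q, hq, hpq⟩ := hpi.exists_unaryPoly_not_rel_comp hαi hβi
    ((hg.1.coord i).map_rel hβi hxy) hgxy hp hpβ
  obtain ⟨f, hf, hfi⟩ := hR.exists_isPolyFam_apply_eq i (hp.comp hq)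
  have hfg := hg.comp_left hαj hf hxy (by rwa [hfi])
  have hfgp : Set.range (fun z => f i (g i z)) ⊆ Set.range p := by
    rintro _ ⟨z, rfl⟩
    exact ⟨q (g i z), by rw [hfi]⟩
  refine Set.eq_of_subset_of_ncard_le hpg ?_ (Set.toFinite _)
  exact (hmin _ hfg).trans (Set.ncard_le_ncard hfgp (Set.toFinite _))

lemma IsSeparatingPolyFam.exists_idempotent_range_eq (hR : SubdirectFam S R)
    (hαi : IsCongruence (S i) αi) (hβi : IsCongruence (S i) βi) (hpi : Prec (S i) αi βi)
    (hαj : IsCongruence (S j) αj) (hβj : IsCongruence (S j) βj) {g : ∀ k, 𝔸 k → 𝔸 k}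
    (hg : IsSeparatingPolyFam S R i j αi βi αj βj g) (hU : MinSet (S i) αi βi (Set.range (g i))) :
    ∃ e, IsSeparatingPolyFam S R i j αi βi αj βj e ∧ (∀ k x, e k (e k x) = e k x) ∧
      Set.range (e i) = Set.range (g i) := by
  set U := Set.range (g i)
  obtain ⟨x, y, hxy, hgxy⟩ : ∃ x y, βi x y ∧ ¬ αi (g i x) (g i y) := by
    simpa [Collapses] using hg.2.1
  have huv : βi (g i x) (g i y) := (hg.1.coord i).map_rel hβi hxy
  obtain ⟨q, hq, hgq⟩ := hpi.exists_unaryPoly_not_rel_comp hαi hβi huv hgxy (hg.1.coord i) hg.2.1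
  obtain ⟨Q, hQ, hQi⟩ := hR.exists_isPolyFam_apply_eq i hq
  let s : Set (∀ k, 𝔸 k → 𝔸 k) :=
    {e | IsPolyFam S R e ∧ Collapses (e j) βj αj ∧ e i '' U = U ∧ Set.range (e i) ⊆ U}
  have hgQ : (fun k z => g k (Q k z)) ∈ s := by
    refine ⟨hg.1.comp hQ, fun a b hab => hg.2.2 _ _ ((hQ.coord j).map_rel hβj hab), ?_,
      by rintro _ ⟨z, rfl⟩; exact ⟨_, rfl⟩⟩
    have hrange := hU.2 _ ⟨_, ((hg.1.coord i).comp hq).comp (hg.1.coord i),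
      fun h => hgq (h x y hxy), rfl⟩ (by rintro _ ⟨z, rfl⟩; exact ⟨_, rfl⟩)
    rw [← Set.range_comp]
    simpa only [Function.comp_def, hQi] using hrange
  have hcomp : ∀ e ∈ s, ∀ e' ∈ s, (fun k z => e k (e' k z)) ∈ s := by
    rintro e ⟨he, hej, heU, heR⟩ e' ⟨he', he'j, he'U, -⟩
    refine ⟨he.comp he', fun a b hab => (he.coord j).map_rel hαj (he'j a b hab), ?_, ?_⟩
    · rw [← Set.image_image, he'U, heU]
    · rintro _ ⟨z, rfl⟩
      exact heR ⟨_, rfl⟩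
  obtain ⟨e, ⟨he, hej, heU, heR⟩, hidem⟩ := exists_idempotent_of_comp_mem ⟨_, hgQ⟩ hcomp
  have hfix : ∀ w ∈ U, e i w = w := by
    rintro w hw
    rw [← heU] at hw
    obtain ⟨w', -, rfl⟩ := hw
    exact hidem i w'
  refine ⟨e, ⟨he, fun h => hgxy ?_, hej⟩, hidem, heR.antisymm fun w hw => ⟨w, hfix w hw⟩⟩
  simpa only [hfix _ ⟨x, rfl⟩, hfix _ ⟨y, rfl⟩] using h _ _ huv

end Separation

end UAlg

open UAlg

theorem stmt5_general {σ : Sig} {n : ℕ} {𝔸 : Fin n → Type} [∀ i, Finite (𝔸 i)]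
    (S : ∀ i, Str σ (𝔸 i)) (R : Set (∀ i, 𝔸 i)) (hR : SubdirectFam S R)
    (i j : Fin n) (αi βi : 𝔸 i → 𝔸 i → Prop) (αj βj : 𝔸 j → 𝔸 j → Prop)
    (hαi : IsCongruence (S i) αi) (hβi : IsCongruence (S i) βi)
    (hαj : IsCongruence (S j) αj) (hβj : IsCongruence (S j) βj)
    (hpi : Prec (S i) αi βi)
    (hsep : SeparatesFam S R i j αi βi αj βj) :
    ∃ f, IsPolyFam S R f ∧ (∀ k x, f k (f k x) = f k x) ∧
      ¬ Collapses (f i) βi αi ∧ Collapses (f j) βj αj ∧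
      MinSet (S i) αi βi (Set.range (f i)) := by
  obtain ⟨g, hg, hmin⟩ := hsep.exists_isSeparatingPolyFam_ncard_range_le
  have hU := hg.minSet_range_of_ncard_le hR hαi hβi hpi hαj hmin
  obtain ⟨e, ⟨he, hei, hej⟩, hidem, heg⟩ :=
    hg.exists_idempotent_range_eq hR hαi hβi hpi hαj hβj hU
  exact ⟨e, he, hidem, hei, hej, heg ▸ hU⟩

/-- a separating polynomial may be chosen idempotent with image on
the i-th coordinate an (α_i,β_i)-minimal set. -/
theorem stmt5 {σ : Sig} {n : ℕ} {𝔸 : Fin n → Type} [∀ i, Finite (𝔸 i)]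
    (S : ∀ i, Str σ (𝔸 i)) (R : Set (∀ i, 𝔸 i)) (hR : SubdirectFam S R)
    (i j : Fin n) (αi βi : 𝔸 i → 𝔸 i → Prop) (αj βj : 𝔸 j → 𝔸 j → Prop)
    (hαi : IsCongruence (S i) αi) (hβi : IsCongruence (S i) βi)
    (hαj : IsCongruence (S j) αj) (hβj : IsCongruence (S j) βj)
    (hpi : Prec (S i) αi βi) (hpj : Prec (S j) αj βj)
    (hsep : SeparatesFam S R i j αi βi αj βj) :
    ∃ f, IsPolyFam S R f ∧ (∀ k x, f k (f k x) = f k x) ∧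
      ¬ Collapses (f i) βi αi ∧ Collapses (f j) βj αj ∧
      MinSet (S i) αi βi (Set.range (f i)) :=
  stmt5_general S R hR i j αi βi αj βj hαi hβi hαj hβj hpi hsep
end

section
/- Let A be a finite algebra and α ≺ β, γ ≺ δ prime intervals in Con(A). If (α,β) and (γ,δ) are perspective intervals, then they cannot be separated from each other. -/
/-!
A unary polynomial respects every congruence, and the join `r ∨ s` of two congruences is the
transitive closure of `r ∪ s`, because a basic operation can be moved along an `r ∪ s`-chain
one argument at a time. Hence a polynomial collapsing `δ` into `α ∧ δ` collapses `α ∨ δ` into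
`α`, and one collapsing `β ∨ γ` into `γ` collapses `β` into `β ∧ γ`. Perspectivity is
symmetric, so these two cases give both halves.
-/

namespace UAlg

open Relation Function

variable {σ : Sig} {A : Type} {S : Str σ A}

theorem Term.eval_rel_of_isCongruence {θ : A → A → Prop} (hθ : IsCongruence S θ) {n : ℕ}
    (t : Term σ n) {x y : Fin n → A} (hxy : ∀ k, θ (x k) (y k)) :
    θ (t.eval S x) (t.eval S y) := by
  induction t with
  | var j => exact hxy j
  | app i ts ih => exact hθ.compat i _ _ fun k => ih k

theorem IsUnaryPoly.collapses {f : A → A} (hf : IsUnaryPoly S f) {θ : A → A → Prop}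
    (hθ : IsCongruence S θ) : Collapses f θ θ := by
  obtain ⟨n, t, c, rfl⟩ := hf
  intro x y hxy
  refine t.eval_rel_of_isCongruence hθ fun k => ?_
  refine Fin.cases ?_ (fun j => ?_) k
  · simpa using hxy
  · simpa using hθ.refl (c j)

def CompatibleInEachArg (S : Str σ A) (R : A → A → Prop) : Prop :=
  ∀ (i : σ.ι) (x : Fin (σ.arity i) → A) (k : Fin (σ.arity i)) (a b : A),
    R a b → R (S i (update x k a)) (S i (update x k b))

section CompatibleInEachArg

variable {r s R : A → A → Prop}

theorem IsCongruence.compatibleInEachArg (hr : IsCongruence S r) : CompatibleInEachArg S r := by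
  intro i x k a b hab
  refine hr.compat i _ _ fun j => ?_
  rcases eq_or_ne j k with rfl | hj
  · simpa using hab
  · simpa [update_of_ne hj] using hr.refl (x j)

theorem CompatibleInEachArg.sup (hr : CompatibleInEachArg S r) (hs : CompatibleInEachArg S s) :
    CompatibleInEachArg S (r ⊔ s) :=
  fun i x k a b hab => hab.imp (hr i x k a b) (hs i x k a b)

theorem CompatibleInEachArg.reflTransGen (hR : CompatibleInEachArg S R) :
    CompatibleInEachArg S (ReflTransGen R) :=
  fun i x k _ _ => ReflTransGen.lift (fun z => S i (update x k z)) (hR i x k) _ _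

theorem CompatibleInEachArg.compat (hR : CompatibleInEachArg S R) (hrefl : ∀ a, R a a)
    (htrans : ∀ a b c, R a b → R b c → R a c) (i : σ.ι) (x y : Fin (σ.arity i) → A)
    (hxy : ∀ k, R (x k) (y k)) : R (S i x) (S i y) := by
  classical
  have hmix : ∀ T : Finset (Fin (σ.arity i)),
      R (S i x) (S i fun j => if j ∈ T then y j else x j) := by
    intro T
    induction T using Finset.induction_on with
    | empty => simpa using hrefl (S i x)
    | @insert k T hk ih =>
      set z : Fin (σ.arity i) → A := fun j => if j ∈ T then y j else x j
      have hzk : update z k (x k) = z := by simp [z, hk]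
      have hins : (fun j => if j ∈ insert k T then y j else x j) = update z k (y k) := by
        funext j
        rcases eq_or_ne j k with rfl | hj
        · simp
        · simp [z, hj]
      refine htrans _ _ _ ih ?_
      simpa only [hzk, hins] using hR i z k _ _ (hxy k)
  simpa using hmix Finset.univ

theorem IsCongruence.reflTransGen_sup (hr : IsCongruence S r) (hs : IsCongruence S s) :
    IsCongruence S (ReflTransGen (r ⊔ s)) where
  refl _ := .refl
  symm _ _ h := ReflTransGen.mono (fun _ _ (hab : (r ⊔ s) _ _) =>
    hab.imp (hr.symm _ _) (hs.symm _ _)) _ _ h.swap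
  trans _ _ _ := .trans
  compat := (hr.compatibleInEachArg.sup hs.compatibleInEachArg).reflTransGen.compat
    (fun _ => .refl) (fun _ _ _ => .trans)

end CompatibleInEachArg

section Lattice

variable {r s θ : A → A → Prop}

theorem congSup_le_reflTransGen_sup (hr : IsCongruence S r) (hs : IsCongruence S s) :
    CongLE (CongSup S r s) (ReflTransGen (r ⊔ s)) :=
  fun _ _ h => h _ (hr.reflTransGen_sup hs) (fun _ _ => .single ∘ Or.inl)
    (fun _ _ => .single ∘ Or.inr)

theorem le_congSup_left : CongLE r (CongSup S r s) :=
  fun _ _ h _ _ hrt _ => hrt _ _ h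

theorem congSup_comm : CongSup S r s = CongSup S s r := by
  funext x y
  exact propext ⟨fun h t ht hs hr => h t ht hr hs, fun h t ht hr hs => h t ht hs hr⟩

theorem relInf_comm : RelInf r s = RelInf s r := by
  funext x y
  exact propext and_comm

theorem Collapses.congSup {f : A → A} (hr : IsCongruence S r) (hs : IsCongruence S s)
    (hθ : IsCongruence S θ) (hfr : Collapses f r θ) (hfs : Collapses f s θ) :
    Collapses f (CongSup S r s) θ := by
  suffices ∀ x y, ReflTransGen (r ⊔ s) x y → θ (f x) (f y) from
    fun x y hxy => this x y (congSup_le_reflTransGen_sup hr hs x y hxy)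
  intro x y hxy
  induction hxy with
  | refl => exact hθ.refl _
  | tail _ hstep ih => exact hθ.trans _ _ _ ih (hstep.elim (hfr _ _) (hfs _ _))

end Lattice

variable {α β γ δ : A → A → Prop}

theorem Perspective.symm (h : Perspective S α β γ δ) : Perspective S γ δ α β := by
  rcases h with ⟨hβ, hγ⟩ | ⟨hδ, hα⟩
  · exact .inr ⟨hβ.trans congSup_comm, hγ.trans relInf_comm⟩
  · exact .inl ⟨hδ.trans congSup_comm, hα.trans relInf_comm⟩

theorem not_separatesIn_of_perspective (hα : IsCongruence S α) (hβ : IsCongruence S β)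
    (hδ : IsCongruence S δ) (h : Perspective S α β γ δ) : ¬ SeparatesIn S α β γ δ := by
  rintro ⟨f, hf, hβα, hδγ⟩
  apply hβα
  rcases h with ⟨rfl, rfl⟩ | ⟨rfl, rfl⟩
  · exact (hf.collapses hα).congSup hα hδ hα fun x y h => (hδγ x y h).1
  · exact fun x y h => ⟨hf.collapses hβ x y h, hδγ x y (le_congSup_left x y h)⟩

end UAlg

open UAlg

theorem stmt6_general {σ : Sig} {A : Type} (S : Str σ A)
    (α β γ δ : A → A → Prop)
    (hα : IsCongruence S α) (hβ : IsCongruence S β)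
    (hγ : IsCongruence S γ) (hδ : IsCongruence S δ)
    (hpersp : Perspective S α β γ δ) :
    ¬ SeparatesIn S α β γ δ ∧ ¬ SeparatesIn S γ δ α β :=
  ⟨not_separatesIn_of_perspective hα hβ hδ hpersp,
    not_separatesIn_of_perspective hγ hδ hβ hpersp.symm⟩

/-- perspective prime intervals cannot be separated from each other. -/
theorem stmt6 {σ : Sig} {A : Type} [Finite A] (S : Str σ A)
    (α β γ δ : A → A → Prop)
    (hα : IsCongruence S α) (hβ : IsCongruence S β)
    (hγ : IsCongruence S γ) (hδ : IsCongruence S δ)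
    (hab : Prec S α β) (hgd : Prec S γ δ)
    (hpersp : Perspective S α β γ δ) :
    ¬ SeparatesIn S α β γ δ ∧ ¬ SeparatesIn S γ δ α β :=
  stmt6_general S α β γ δ hα hβ hγ hδ hpersp
end

section
/- Let A be a finite algebra with prime intervals α ≺ β and γ ≺ δ in Con(A). If neither (α,β) can be separated from (γ,δ) nor (γ,δ) from (α,β), then a subset U ⊆ A is an (α,β)-minimal set if and only if it is a (γ,δ)-minimal set. -/
open UAlg

/-- if (α,β) and (γ,δ) cannot be separated in either direction,
they have the same minimal sets. -/
theorem stmt7 {σ : Sig} {A : Type} [Finite A] (S : Str σ A)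
    (α β γ δ : A → A → Prop)
    (hα : IsCongruence S α) (hβ : IsCongruence S β)
    (hγ : IsCongruence S γ) (hδ : IsCongruence S δ)
    (hab : Prec S α β) (hgd : Prec S γ δ)
    (h1 : ¬ SeparatesIn S α β γ δ) (h2 : ¬ SeparatesIn S γ δ α β) :
    ∀ U : Set A, MinSet S α β U ↔ MinSet S γ δ U := by
  have key : ∀ f, IsUnaryPoly S f → (¬ Collapses f β α ↔ ¬ Collapses f δ γ) := by
    intro f hf
    constructor
    · intro hn hc
      exact h1 ⟨f, hf, hn, hc⟩
    · intro hn hc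
      exact h2 ⟨f, hf, hn, hc⟩
  have wit : ∀ U : Set A, MinSetWitness S α β U ↔ MinSetWitness S γ δ U := by
    intro U
    constructor
    · rintro ⟨f, hf, hn, hr⟩
      exact ⟨f, hf, (key f hf).mp hn, hr⟩
    · rintro ⟨f, hf, hn, hr⟩
      exact ⟨f, hf, (key f hf).mpr hn, hr⟩
  intro U
  constructor
  · rintro ⟨hw, hmin⟩
    exact ⟨(wit U).mp hw, fun V hV hsub => hmin V ((wit V).mpr hV) hsub⟩
  · rintro ⟨hw, hmin⟩
    exact ⟨(wit U).mpr hw, fun V hV hsub => hmin V ((wit V).mp hV) hsub⟩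
end

section
/- Let A be a finite smooth idempotent algebra omitting type 1 and α ∈ Con(A) with 0 ≺ α. If some α-block contains a semilattice or majority edge, then the prime interval (0, α) has type 3, 4, or 5 (in particular it is not of type 2). -/
open UAlg

namespace Stmt18Aux

open UAlg

variable {σ : Sig} {A : Type}

/-- Substitution of terms into a term. -/
def subst {n m : ℕ} : Term σ n → (Fin n → Term σ m) → Term σ m
  | .var j, g => g j
  | .app i ts, g => .app i (fun k => subst (ts k) g)

lemma eval_subst {n m : ℕ} (S : Str σ A) (t : Term σ n) (g : Fin n → Term σ m)
    (x : Fin m → A) :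
    (subst t g).eval S x = t.eval S (fun j => (g j).eval S x) := by
  induction t with
  | var j => rfl
  | app i ts ih => simp only [subst, Term.eval, ih]

lemma subuniv_sg (S : Str σ A) (X : Set A) : Subuniv S (Sg S X) := by
  intro i x hx
  intro Y hY hXY
  exact hY i x (fun k => hx k Y hY hXY)

lemma subset_sg (S : Str σ A) (X : Set A) : X ⊆ Sg S X :=
  fun a ha Y _ hXY => hXY ha

lemma sg_subset (S : Str σ A) {X Y : Set A} (hY : Subuniv S Y) (hXY : X ⊆ Y) :
    Sg S X ⊆ Y := fun _ ha => ha Y hY hXY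

lemma eval_mem {n : ℕ} (S : Str σ A) {B : Set A} (hB : Subuniv S B)
    (t : Term σ n) (x : Fin n → A) (hx : ∀ j, x j ∈ B) : t.eval S x ∈ B := by
  induction t with
  | var j => exact hx j
  | app i ts ih => exact hB i _ (fun k => ih k)

lemma eval_idem {n : ℕ} (S : Str σ A) (hid : IdemStr S) (t : Term σ n)
    (c : A) (x : Fin n → A) (hx : ∀ j, x j = c) : t.eval S x = c := by
  induction t with
  | var j => exact hx j
  | app i ts ih =>
      show S i _ = c
      have : (fun k => Term.eval S (ts k) x) = fun _ => c := funext fun k => ih k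
      rw [this, hid i c]

lemma eval_congOn {n : ℕ} (S : Str σ A) {B : Set A} {θ : A → A → Prop}
    (hB : Subuniv S B) (hθ : CongOn S B θ) (t : Term σ n) (x y : Fin n → A)
    (hx : ∀ j, x j ∈ B) (hy : ∀ j, y j ∈ B) (hxy : ∀ j, θ (x j) (y j)) :
    θ (t.eval S x) (t.eval S y) := by
  induction t with
  | var j => exact hxy j
  | app i ts ih =>
      exact hθ.2.2.2 i _ _ (fun k => eval_mem S hB (ts k) x hx)
        (fun k => eval_mem S hB (ts k) y hy) (fun k => ih k)

lemma exists_idem_iterate [Finite A] (ρ : A → A) (b : A) :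
    ∃ N, 0 < N ∧ ρ^[N] (ρ^[N] b) = ρ^[N] b := by
  have aux : ∀ x y : ℕ, x < y → ρ^[x] b = ρ^[y] b →
      ∃ N, 0 < N ∧ ρ^[N] (ρ^[N] b) = ρ^[N] b := by
    intro x y h hfe
    have key : ∀ i, x ≤ i → ρ^[i] b = ρ^[i + (y - x)] b := by
      intro i hi
      have hstep : ρ^[i - x + x] b = ρ^[i - x + y] b := by
        rw [Function.iterate_add_apply, Function.iterate_add_apply, hfe]
      have e1 : i - x + x = i := by omega
      have e2 : i - x + y = i + (y - x) := by omega
      rw [e1, e2] at hstep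
      exact hstep
    have key2 : ∀ c i, x ≤ i → ρ^[i] b = ρ^[i + c * (y - x)] b := by
      intro c
      induction c with
      | zero => intro i _; simp
      | succ c ih =>
          intro i hi
          have hk := key (i + c * (y - x)) (by omega)
          have h3 : i + c * (y - x) + (y - x) = i + (c + 1) * (y - x) := by ring
          rw [ih i hi, ← h3, ← hk]
    have hyx : 0 < y - x := by omega
    refine ⟨(x + 1) * (y - x), by positivity, ?_⟩
    rw [← Function.iterate_add_apply]
    have := key2 (x + 1) ((x + 1) * (y - x)) (by nlinarith)
    rw [← this]
  obtain ⟨x, y, hxy, hfe⟩ :=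
    Finite.exists_ne_map_eq_of_infinite (fun n : ℕ => ρ^[n] b)
  rcases Nat.lt_or_ge x y with h | h
  · exact aux x y h hfe
  · exact aux y x (by omega) hfe.symm

end Stmt18Aux

namespace Stmt18Aux

open UAlg

variable {σ : Sig} {A : Type}

/-- The core contradiction: a parameterized unary polynomial `p x ·` whose
`cpar`-instance collapses the θ-classes of `z0` and `tgt` (mod θ) while the
`dpar`-instance preserves them contradicts the term condition `TC S α α (=)`. -/
lemma core [Finite A] (S : Str σ A) (α : A → A → Prop)
    {B : Set A} {θ : A → A → Prop} (hθ : CongOn S B θ)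
    (hblockB : ∀ x ∈ B, ∀ y ∈ B, α x y)
    (hTC : TC S α α (· = ·))
    (p : A → A → A)
    (hrep : ∀ N : ℕ, ∃ f : (Fin 2 → A) → A, IsPolyOp S 2 f ∧
      ∀ x z : A, f (Fin.cons x (fun _ => z)) = (p x)^[N] z)
    (hmem : ∀ x z, x ∈ B → z ∈ B → p x z ∈ B)
    (cpar dpar z0 tgt : A)
    (hcB : cpar ∈ B) (hdB : dpar ∈ B) (hzB : z0 ∈ B) (htB : tgt ∈ B)
    (hne : ¬ θ z0 tgt)
    (hcol1 : θ (p cpar z0) tgt)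
    (hcolt : ∀ z ∈ B, θ z tgt → θ (p cpar z) tgt)
    (hprez : ∀ z ∈ B, θ z z0 → θ (p dpar z) z0)
    (hpret : ∀ z ∈ B, θ z tgt → θ (p dpar z) tgt) : False := by
  obtain ⟨hrefl, hsymm, htrans, _⟩ := hθ
  obtain ⟨N, hN0, hNidem⟩ := exists_idem_iterate (p cpar) z0
  -- membership of iterates
  have hmemc : ∀ n, (p cpar)^[n] z0 ∈ B := by
    intro n; induction n with
    | zero => exact hzB
    | succ n ih => rw [Function.iterate_succ_apply']; exact hmem _ _ hcB ih
  set uE := (p cpar)^[N] z0 with huE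
  have huEB : uE ∈ B := hmemc N
  have huEtgt : θ uE tgt := by
    have : ∀ n, 0 < n → θ ((p cpar)^[n] z0) tgt := by
      intro n hn
      induction n with
      | zero => omega
      | succ n ih =>
          rcases Nat.eq_zero_or_pos n with h0 | hpos
          · subst h0; simpa using hcol1
          · rw [Function.iterate_succ_apply']
            exact hcolt _ (hmemc n) (ih hpos)
    exact this N hN0
  obtain ⟨f, hf, heval⟩ := hrep N
  have hiff := hTC 1 f hf cpar dpar (fun _ => z0) (fun _ => uE)
    (hblockB cpar hcB dpar hdB) (fun _ => hblockB z0 hzB uE huEB)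
  have hLHS : f (Fin.cons cpar (fun _ => z0)) = f (Fin.cons cpar (fun _ => uE)) := by
    rw [heval, heval, ← huE, hNidem]
  have hRHS := hiff.mp hLHS
  rw [heval, heval] at hRHS
  -- θ-facts for the d-side iterates
  have hmemd : ∀ w, w ∈ B → ∀ n, (p dpar)^[n] w ∈ B := by
    intro w hw n; induction n with
    | zero => exact hw
    | succ n ih => rw [Function.iterate_succ_apply']; exact hmem _ _ hdB ih
  have hdz : ∀ n, θ ((p dpar)^[n] z0) z0 := by
    intro n; induction n with
    | zero => exact hrefl z0 hzB
    | succ n ih =>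
        rw [Function.iterate_succ_apply']
        exact hprez _ (hmemd z0 hzB n) ih
  have hdt : ∀ n, θ ((p dpar)^[n] uE) tgt := by
    intro n; induction n with
    | zero => exact huEtgt
    | succ n ih =>
        rw [Function.iterate_succ_apply']
        exact hpret _ (hmemd uE huEB n) ih
  have : θ z0 tgt :=
    htrans _ _ _ (hsymm _ _ (hdz N)) (hRHS ▸ hdt N)
  exact hne this

end Stmt18Aux

namespace Stmt18Aux

open UAlg

variable {σ : Sig} {A : Type}

lemma append_elim0 {k : ℕ} (x : Fin k → A) :
    Fin.append x (Fin.elim0 : Fin 0 → A) = x := by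
  funext i
  have hi : (i : ℕ) < k := i.isLt
  simp only [Fin.append, Fin.addCases]
  rw [dif_pos hi]
  exact congrArg x (Fin.ext rfl)

/-- Iterate a binary term in its first argument: variables of the result:
0 = parameter, 1 = iterand. The base term `t` has: 0 = iterand-slot, 1 = param. -/
def trecSL (t : Term σ 2) : ℕ → Term σ 2
  | 0 => .var 1
  | n + 1 => subst t (Fin.cons (trecSL t n) (fun _ => .var 0))

lemma trecSL_eval (S : Str σ A) (t : Term σ 2) (f : A → A → A)
    (ht : ∀ x y, f x y = t.eval S (Fin.cons x (Fin.cons y (fun i => i.elim0))))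
    (N : ℕ) (w : Fin 2 → A) :
    (trecSL t N).eval S w = (fun z => f z (w 0))^[N] (w 1) := by
  induction N with
  | zero => rfl
  | succ n ih =>
      show (subst t _).eval S w = _
      rw [eval_subst, Function.iterate_succ_apply']
      have harg : (fun j => ((Fin.cons (trecSL t n) (fun _ => Term.var 0) : Fin 2 → Term σ 2) j).eval S w)
          = Fin.cons ((trecSL t n).eval S w)
              (Fin.cons (w 0) (fun i => i.elim0)) := by
        funext j
        match j with
        | ⟨0, _⟩ => rfl
        | ⟨1, _⟩ => rfl
      rw [harg, ← ht, ih]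

/-- Iterate a ternary term in its first argument: variables of the result:
0 = varying parameter (third slot of `t`), 1 = iterand, 2 = fixed parameter
(second slot of `t`). -/
def trecMJ (t : Term σ 3) : ℕ → Term σ 3
  | 0 => .var 1
  | n + 1 => subst t (Fin.cons (trecMJ t n) (Fin.cons (.var 2) (fun _ => .var 0)))

lemma trecMJ_eval (S : Str σ A) (t : Term σ 3) (g : A → A → A → A)
    (ht : ∀ x y z, g x y z =
      t.eval S (Fin.cons x (Fin.cons y (Fin.cons z (fun i => i.elim0)))))
    (N : ℕ) (w : Fin 3 → A) :
    (trecMJ t N).eval S w = (fun z => g z (w 2) (w 0))^[N] (w 1) := by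
  induction N with
  | zero => rfl
  | succ n ih =>
      show (subst t _).eval S w = _
      rw [eval_subst, Function.iterate_succ_apply']
      have harg : (fun j => ((Fin.cons (trecMJ t n)
            (Fin.cons (Term.var 2) (fun _ => Term.var 0)) : Fin 3 → Term σ 3) j).eval S w)
          = Fin.cons ((trecMJ t n).eval S w)
              (Fin.cons (w 2) (Fin.cons (w 0) (fun i => i.elim0))) := by
        funext j
        match j with
        | ⟨0, _⟩ => rfl
        | ⟨1, _⟩ => rfl
        | ⟨2, _⟩ => rfl
      rw [harg, ← ht, ih]

end Stmt18Aux



/-- if 0 ≺ α and some α-block contains a semilattice or majority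
edge, then typ(0,α) ≠ 2. -/
theorem stmt18 {σ : Sig} {A : Type} [Finite A] (S : Str σ A)
    (hid : IdemStr S) (h1 : OmitsType1 S)
    (α : A → A → Prop) (hα : IsCongruence S α)
    (hprec : Prec S (· = ·) α)
    (a b : A) (hblock : α a b)
    (hedge : SLEdge S a b ∨ MajEdge S a b) :
    ¬ TypIs S (· = ·) α 2 := by
  rintro ⟨hTC, -⟩
  set B := Sg S {a, b} with hB
  have hBsub : Subuniv S B := Stmt18Aux.subuniv_sg S _
  have haB : a ∈ B := Stmt18Aux.subset_sg S _ (by left; rfl)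
  have hbB : b ∈ B := Stmt18Aux.subset_sg S _ (by right; rfl)
  have hblockB : ∀ x ∈ B, α x a := by
    intro x hx
    refine Stmt18Aux.sg_subset S (Y := {y | α y a}) ?_ ?_ hx
    · intro i z hz
      have hc := hα.compat i z (fun _ => a) (fun k => hz k)
      rwa [hid i a] at hc
    · intro y hy
      rcases hy with h | h
      · rw [h]; exact hα.refl a
      · rw [h]; exact hα.symm a b hblock
  have hblock2 : ∀ x ∈ B, ∀ y ∈ B, α x y := fun x hx y hy =>
    hα.trans _ _ _ (hblockB x hx) (hα.symm _ _ (hblockB y hy))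
  cases hedge with
  | inl hsl =>
      obtain ⟨θ, hmax, hnab, f, ⟨tf, htf⟩, hfab, hfba, hfaa, hfbb⟩ := hsl
      have hθ : CongOn S B θ := hmax.1
      have hrefl := hθ.1
      have htrans := hθ.2.2.1
      have htf' : ∀ x y, f x y =
          tf.eval S (Fin.cons x (Fin.cons y (fun i => i.elim0))) := by
        intro x y; rw [htf]
      have hmem2 : ∀ x y, x ∈ B → y ∈ B → f x y ∈ B := by
        intro x y hx hy
        rw [htf']
        refine Stmt18Aux.eval_mem S hBsub _ _ ?_
        intro j
        match j with
        | ⟨0, _⟩ => exact hx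
        | ⟨1, _⟩ => exact hy
      have hcong2 : ∀ x x' y y', x ∈ B → x' ∈ B → y ∈ B → y' ∈ B →
          θ x x' → θ y y' → θ (f x y) (f x' y') := by
        intro x x' y y' hx hx' hy hy' h1 h2
        rw [htf', htf']
        refine Stmt18Aux.eval_congOn S hBsub hθ _ _ _ ?_ ?_ ?_ <;> intro j
        · match j with
          | ⟨0, _⟩ => exact hx
          | ⟨1, _⟩ => exact hy
        · match j with
          | ⟨0, _⟩ => exact hx'
          | ⟨1, _⟩ => exact hy'
        · match j with
          | ⟨0, _⟩ => exact h1
          | ⟨1, _⟩ => exact h2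
      have hrep : ∀ N : ℕ, ∃ F : (Fin 2 → A) → A, IsPolyOp S 2 F ∧
          ∀ x z : A, F (Fin.cons x (fun _ => z)) = (fun w => f w x)^[N] z := by
        intro N
        refine ⟨fun w => (Stmt18Aux.trecSL tf N).eval S
            (Fin.append w (Fin.elim0 : Fin 0 → A)),
          ⟨0, Stmt18Aux.trecSL tf N, (Fin.elim0 : Fin 0 → A), rfl⟩, ?_⟩
        intro x z
        show (Stmt18Aux.trecSL tf N).eval S
            (Fin.append (Fin.cons x (fun _ => z)) (Fin.elim0 : Fin 0 → A)) = _
        rw [Stmt18Aux.append_elim0, Stmt18Aux.trecSL_eval S tf f htf' N]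
        rfl
      exact Stmt18Aux.core S α hθ hblock2 hTC (fun x z => f z x) hrep
        (fun x z hx hz => hmem2 z x hz hx) b a a b hbB haB haB hbB hnab
        hfab
        (fun z hz hzb => htrans _ _ _
          (hcong2 z b b b hz hbB hbB hbB hzb (hrefl b hbB)) hfbb)
        (fun z hz hza => htrans _ _ _
          (hcong2 z a a a hz haB haB haB hza (hrefl a haB)) hfaa)
        (fun z hz hzb => htrans _ _ _
          (hcong2 z b a a hz hbB haB haB hzb (hrefl a haB)) hfba)
  | inr hmj =>
      obtain ⟨θ, hmax, hnab, g, ⟨tg, htg⟩, haab, haba, hbaa, habb, hbab, hbba⟩ := hmj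
      have hθ : CongOn S B θ := hmax.1
      have hrefl := hθ.1
      have hsymm := hθ.2.1
      have htrans := hθ.2.2.1
      have htg' : ∀ x y z, g x y z =
          tg.eval S (Fin.cons x (Fin.cons y (Fin.cons z (fun i => i.elim0)))) := by
        intro x y z; rw [htg]
      have hmem3 : ∀ x y z, x ∈ B → y ∈ B → z ∈ B → g x y z ∈ B := by
        intro x y z hx hy hz
        rw [htg']
        refine Stmt18Aux.eval_mem S hBsub _ _ ?_
        intro j
        match j with
        | ⟨0, _⟩ => exact hx
        | ⟨1, _⟩ => exact hy
        | ⟨2, _⟩ => exact hz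
      have hcong3 : ∀ x x' y y' z z', x ∈ B → x' ∈ B → y ∈ B → y' ∈ B →
          z ∈ B → z' ∈ B → θ x x' → θ y y' → θ z z' →
          θ (g x y z) (g x' y' z') := by
        intro x x' y y' z z' hx hx' hy hy' hz hz' h1 h2 h3
        rw [htg', htg']
        refine Stmt18Aux.eval_congOn S hBsub hθ _ _ _ ?_ ?_ ?_ <;> intro j
        · match j with
          | ⟨0, _⟩ => exact hx
          | ⟨1, _⟩ => exact hy
          | ⟨2, _⟩ => exact hz
        · match j with
          | ⟨0, _⟩ => exact hx'
          | ⟨1, _⟩ => exact hy'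
          | ⟨2, _⟩ => exact hz'
        · match j with
          | ⟨0, _⟩ => exact h1
          | ⟨1, _⟩ => exact h2
          | ⟨2, _⟩ => exact h3
      have hgaaa : g a a a = a := by
        rw [htg']
        refine Stmt18Aux.eval_idem S hid _ a _ ?_
        intro j
        match j with
        | ⟨0, _⟩ => rfl
        | ⟨1, _⟩ => rfl
        | ⟨2, _⟩ => rfl
      have hrep : ∀ N : ℕ, ∃ F : (Fin 2 → A) → A, IsPolyOp S 2 F ∧
          ∀ x z : A, F (Fin.cons x (fun _ => z)) = (fun w => g w a x)^[N] z := by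
        intro N
        refine ⟨fun w => (Stmt18Aux.trecMJ tg N).eval S
            (Fin.append w (fun _ : Fin 1 => a)),
          ⟨1, Stmt18Aux.trecMJ tg N, (fun _ : Fin 1 => a), rfl⟩, ?_⟩
        intro x z
        show (Stmt18Aux.trecMJ tg N).eval S
            (Fin.append (Fin.cons x (fun _ => z)) (fun _ : Fin 1 => a)) = _
        rw [Stmt18Aux.trecMJ_eval S tg g htg' N]
        rfl
      refine Stmt18Aux.core S α hθ hblock2 hTC (fun x z => g z a x) hrep
        (fun x z hx hz => hmem3 z a x hz haB hx) a b b a haB hbB hbB haB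
        (fun h => hnab (hsymm _ _ h))
        hbaa
        (fun z hz hza => htrans _ _ _
          (hcong3 z a a a a a hz haB haB haB haB haB hza (hrefl a haB) (hrefl a haB))
          (show θ (g a a a) a by rw [hgaaa]; exact hrefl a haB))
        (fun z hz hzb => htrans _ _ _
          (hcong3 z b a a b b hz hbB haB haB hbB hbB hzb (hrefl a haB) (hrefl b hbB))
          hbab)
        (fun z hz hza => htrans _ _ _
          (hcong3 z a a a b b hz haB haB haB hbB hbB hza (hrefl a haB) (hrefl b hbB))
          haab)
end
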